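/- A restart sequence together with the mean determines the distribution uniquely: if u and v are two probability mass functions on ℕ with finite means μ_u = ∑'_{n} n·u(n) and μ_v = ∑'_{n} n·v(n), if μ_u = μ_v, and if their restart sequences agree (S_u(n) = S_v(n) for all n ≥ 0), then u(n) = v(n) for all n. -/

import Mathlib

open Finset

section

variable {R : Type*} [CommRing R]

/-- `restartSeq w μ n = S_w(n)`; `μ` is a free parameter, to be instantiated by the mean of `w`. -/
def restartSeq (w : ℕ → R) (μ : R) (n : ℕ) : R :=
  ∑ k ∈ range (n + 1), (1 - ∑ j ∈ range (k + 1), w j - w k * μ)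

theorem eq_of_forall_sum_range_succ_eq {M : Type*} [AddCommGroup M] {f g : ℕ → M}
    (h : ∀ n, ∑ k ∈ range (n + 1), f k = ∑ k ∈ range (n + 1), g k) : f = g := by
  funext n
  cases n with
  | zero => simpa using h 0
  | succ n =>
    have h_succ := h (n + 1)
    rw [sum_range_succ f, sum_range_succ g, h n] at h_succ
    exact add_left_cancel h_succ

/-- The system `W_u(n) + c u(n) = W_v(n) + c v(n)` is triangular with diagonal `1 + c`. -/
theorem eq_of_forall_sum_range_succ_add_mul_eq [IsDomain R] {u v : ℕ → R} {c : R}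
    (hc : 1 + c ≠ 0)
    (h : ∀ n, ∑ j ∈ range (n + 1), u j + u n * c = ∑ j ∈ range (n + 1), v j + v n * c) :
    u = v := by
  funext n
  induction n using Nat.strong_induction_on with
  | _ n ih =>
    have h_prefix : ∑ j ∈ range n, u j = ∑ j ∈ range n, v j :=
      sum_congr rfl fun j hj => ih j (mem_range.mp hj)
    have h_diag : u n * (1 + c) = v n * (1 + c) := by
      have := h n
      rw [sum_range_succ, sum_range_succ, h_prefix] at this
      linear_combination this
    exact mul_right_cancel₀ hc h_diag

theorem restartSeq_injective [IsDomain R] {u v : ℕ → R} {μ : R} (hμ : 1 + μ ≠ 0)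
    (h : restartSeq u μ = restartSeq v μ) : u = v := by
  have h_terms := eq_of_forall_sum_range_succ_eq fun n => congrFun h n
  refine eq_of_forall_sum_range_succ_add_mul_eq hμ fun n => ?_
  linear_combination -congrFun h_terms n

end

theorem restart_sequence_and_mean_determine_distribution_general
    (u v : ℕ → ℝ)
    (hu0 : ∀ n, 0 ≤ u n)
    (μu μv : ℝ)
    (hμu : μu = ∑' n : ℕ, (n : ℝ) * u n)
    (hμ : μu = μv)
    (hSS : ∀ n, ∑ k ∈ Finset.range (n + 1),
        (1 - (∑ j ∈ Finset.range (k + 1), u j) - u k * μu) =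
      ∑ k ∈ Finset.range (n + 1),
        (1 - (∑ j ∈ Finset.range (k + 1), v j) - v k * μv)) :
    ∀ n, u n = v n := by
  subst hμ
  have hμ_nonneg : 0 ≤ μu := hμu ▸ tsum_nonneg fun n => mul_nonneg n.cast_nonneg (hu0 n)
  have hμ_ne : 1 + μu ≠ 0 := by positivity
  exact congrFun (restartSeq_injective hμ_ne (funext hSS))

theorem restart_sequence_and_mean_determine_distribution
    (u v : ℕ → ℝ)
    (hu0 : ∀ n, 0 ≤ u n) (hu1 : ∑' n, u n = 1)
    (hv0 : ∀ n, 0 ≤ v n) (hv1 : ∑' n, v n = 1)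
    (humean : Summable (fun n : ℕ => (n : ℝ) * u n))
    (hvmean : Summable (fun n : ℕ => (n : ℝ) * v n))
    (μu μv : ℝ)
    (hμu : μu = ∑' n : ℕ, (n : ℝ) * u n) (hμv : μv = ∑' n : ℕ, (n : ℝ) * v n)
    (hμ : μu = μv)
    (hSS : ∀ n, ∑ k ∈ Finset.range (n + 1),
        (1 - (∑ j ∈ Finset.range (k + 1), u j) - u k * μu) =
      ∑ k ∈ Finset.range (n + 1),
        (1 - (∑ j ∈ Finset.range (k + 1), v j) - v k * μv)) :
    ∀ n, u n = v n :=
  restart_sequence_and_mean_determine_distribution_general u v hu0 μu μv hμu hμ hSS
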